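/- Let (R,Δ) be an odd form ring, n ∈ ℕ, and let I be an involution invariant ideal of R. Denote by ROFP(I) the set of all relative odd form parameters for I. Then the map (σ,Ω) ↦ ^σΩ is a left group action of U_{2n+1}(R,Δ) on ROFP(I): for every Ω ∈ ROFP(I), ^σΩ ∈ ROFP(I), ^eΩ = Ω, and ^{στ}Ω = ^σ(^τΩ) for all σ,τ ∈ U_{2n+1}(R,Δ). -/

import Mathlib

open scoped BigOperators

noncomputable section

/-- The index set `Θ = {-n, …, n}` for the odd-dimensional unitary group. -/
abbrev Idx (n : ℕ) : Type := {i : ℤ // i ∈ Finset.Icc (-(n : ℤ)) (n : ℤ)}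

namespace Idx

/-- Negation of an index. -/
def neg {n : ℕ} (i : Idx n) : Idx n :=
  ⟨-i.1, by have h := i.2; rw [Finset.mem_Icc] at h ⊢; omega⟩

/-- The index `0`. -/
def zero (n : ℕ) : Idx n := ⟨0, by rw [Finset.mem_Icc]; omega⟩

/-- Construct an index from an integer. -/
def of (n : ℕ) (i : ℤ) (h1 : -(n : ℤ) ≤ i) (h2 : i ≤ (n : ℤ)) : Idx n :=
  ⟨i, Finset.mem_Icc.mpr ⟨h1, h2⟩⟩

end Idx

/-- The positive indices `{1, …, n}`. -/
def posIdx (n : ℕ) : Finset (Idx n) := Finset.univ.filter (fun i => 0 < i.1)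

/-- The position of an index in the ordering `1, …, n, 0, -n, …, -1`. -/
def ordIdx {n : ℕ} (i : Idx n) : ℤ :=
  if 0 < i.1 then i.1 else if i.1 = 0 then (n : ℤ) + 1 else 2 * (n : ℤ) + 2 + i.1

/-- The group `GL_{2n+1}(R)` of invertible `(2n+1) × (2n+1)` matrices. -/
abbrev GLn (R : Type*) [Ring R] (n : ℕ) : Type _ := (Matrix (Idx n) (Idx n) R)ˣ

/-- `J(Ω) = {y | ∃ z, (y, z) ∈ Ω}`. -/
def JSet {R : Type*} (Ω : Set (R × R)) : Set R := {y | ∃ z, (y, z) ∈ Ω}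

/-- `M(R, Δ) = {u | u_0 ∈ J(Δ)}`. -/
def MRD {R : Type*} (Δ : Set (R × R)) (n : ℕ) : Set (Idx n → R) :=
  {u | u (Idx.zero n) ∈ JSet Δ}

/-- `M(I, Ω) = {u | u_i ∈ I for i ∈ Θ_hb, u_0 ∈ J(Ω)}`. -/
def MIO {R : Type*} (I : Set R) (Ω : Set (R × R)) (n : ℕ) : Set (Idx n → R) :=
  {u | (∀ i : Idx n, i.1 ≠ 0 → u i ∈ I) ∧ u (Idx.zero n) ∈ JSet Ω}

/-- The data of an odd quadruple `(R, ⁻, λ, μ)`: a ring with an anti-isomorphism `bar`,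
a symmetry `lam` and an element `mu` with `mu = bar mu * lam`. -/
structure OddFormRingData (R : Type*) [Ring R] where
  bar : R → R
  lam : R
  mu : R
  bar_bijective : Function.Bijective bar
  bar_add : ∀ x y : R, bar (x + y) = bar x + bar y
  bar_mul : ∀ x y : R, bar (x * y) = bar y * bar x
  bar_one : bar 1 = 1
  bar_bar : ∀ x : R, bar (bar x) = lam * x * bar lam
  mu_symm : mu = bar mu * lam

namespace OddFormRingData

variable {R : Type*} [Ring R] (D : OddFormRingData R)

/-- Heisenberg addition `∔` on `R × R`. -/
def hAdd (a b : R × R) : R × R := (a.1 + b.1, a.2 + b.2 - D.bar a.1 * D.mu * b.1)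

/-- Heisenberg negation. -/
def hNeg (a : R × R) : R × R := (-a.1, -a.2 - D.bar a.1 * D.mu * a.1)

/-- Heisenberg subtraction `∸`. -/
def hSub (a b : R × R) : R × R := D.hAdd a (D.hNeg b)

/-- The scalar operation `(x, y) • a = (x a, ā y a)`. -/
def hSMul (a : R × R) (r : R) : R × R := (a.1 * r, D.bar r * a.2 * r)

/-- `Δ_min = {(0, x - x̄ λ) | x ∈ R}`. -/
def DeltaMin : Set (R × R) := {p | ∃ x : R, p = (0, x - D.bar x * D.lam)}

/-- `Δ_max = {(x, y) | x̄ μ x + y + ȳ λ = 0}`. -/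
def DeltaMax : Set (R × R) := {p | D.bar p.1 * D.mu * p.1 + p.2 + D.bar p.2 * D.lam = 0}

/-- `Δ` is an odd form parameter. -/
structure IsFormParam (Δ : Set (R × R)) : Prop where
  add_mem : ∀ a ∈ Δ, ∀ b ∈ Δ, D.hAdd a b ∈ Δ
  neg_mem : ∀ a ∈ Δ, D.hNeg a ∈ Δ
  smul_mem : ∀ a ∈ Δ, ∀ r : R, D.hSMul a r ∈ Δ
  min_le : D.DeltaMin ⊆ Δ
  le_max : Δ ⊆ D.DeltaMax

/-- `I` is an involution invariant (two-sided) ideal of `R`. -/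
structure IsInvIdeal (I : Set R) : Prop where
  zero_mem : (0 : R) ∈ I
  add_mem : ∀ x ∈ I, ∀ y ∈ I, x + y ∈ I
  neg_mem : ∀ x ∈ I, -x ∈ I
  mul_left : ∀ r : R, ∀ x ∈ I, r * x ∈ I
  mul_right : ∀ r : R, ∀ x ∈ I, x * r ∈ I
  bar_mem : ∀ x ∈ I, D.bar x ∈ I

/-- `Ĩ = {x | ȳ μ x ∈ I for all y ∈ J(Δ)}`. -/
def tildeI (Δ : Set (R × R)) (I : Set R) : Set R :=
  {x | ∀ y ∈ JSet Δ, D.bar y * D.mu * x ∈ I}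

/-- `Ω^I_min`, the `∔`-subgroup of `R × R` generated by `{(0, x - x̄λ) | x ∈ I}` and
`{a • c | a ∈ Δ, c ∈ I}`. -/
inductive OmegaMin (Δ : Set (R × R)) (I : Set R) : R × R → Prop
  | base (x : R) (hx : x ∈ I) : OmegaMin Δ I (0, x - D.bar x * D.lam)
  | smul (a : R × R) (ha : a ∈ Δ) (c : R) (hc : c ∈ I) : OmegaMin Δ I (D.hSMul a c)
  | add (a b : R × R) : OmegaMin Δ I a → OmegaMin Δ I b → OmegaMin Δ I (D.hAdd a b)
  | neg (a : R × R) : OmegaMin Δ I a → OmegaMin Δ I (D.hNeg a)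

/-- `Ω^I_min` as a set. -/
def OmegaMinSet (Δ : Set (R × R)) (I : Set R) : Set (R × R) := {p | D.OmegaMin Δ I p}

/-- `Ω^I_max = Δ ∩ (Ĩ × I)`. -/
def OmegaMaxSet (Δ : Set (R × R)) (I : Set R) : Set (R × R) :=
  {p | p ∈ Δ ∧ p.1 ∈ D.tildeI Δ I ∧ p.2 ∈ I}

/-- `Ω` is a relative odd form parameter for `I`. -/
structure IsRelFormParam (Δ : Set (R × R)) (I : Set R) (Ω : Set (R × R)) : Prop where
  add_mem : ∀ a ∈ Ω, ∀ b ∈ Ω, D.hAdd a b ∈ Ω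
  neg_mem : ∀ a ∈ Ω, D.hNeg a ∈ Ω
  smul_mem : ∀ a ∈ Ω, ∀ r : R, D.hSMul a r ∈ Ω
  min_le : D.OmegaMinSet Δ I ⊆ Ω
  le_max : Ω ⊆ D.OmegaMaxSet Δ I

/-- `(I, Ω)` is an odd form ideal of `(R, Δ)`. -/
def IsFormIdeal (Δ : Set (R × R)) (I : Set R) (Ω : Set (R × R)) : Prop :=
  D.IsInvIdeal I ∧ D.IsRelFormParam Δ I Ω

/-- `Ω^{-1} = {(x, y) | (x, ȳ) ∈ Ω}`. -/
def paramInv (Ω : Set (R × R)) : Set (R × R) := {p | (p.1, D.bar p.2) ∈ Ω}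

/-- `Ω^{-ε(i)}`. -/
def paramPow {n : ℕ} (Ω : Set (R × R)) (i : Idx n) : Set (R × R) :=
  if 0 < i.1 then D.paramInv Ω else Ω

/-- The λ-Hermitian form `b`. -/
def bform {n : ℕ} (u v : Idx n → R) : R :=
  (∑ i ∈ posIdx n, D.bar (u i) * v i.neg) + D.bar (u (Idx.zero n)) * D.mu * v (Idx.zero n)
    + ∑ i ∈ posIdx n, D.bar (u i.neg) * D.lam * v i

/-- The quadratic map `q`. -/
def qform {n : ℕ} (u : Idx n → R) : R × R :=
  (u (Idx.zero n), ∑ i ∈ posIdx n, D.bar (u i) * u i.neg)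

/-- The odd-dimensional unitary group `U_{2n+1}(R, Δ)`, as a subset of `GL_{2n+1}(R)`. -/
def unitary (Δ : Set (R × R)) (n : ℕ) : Set (GLn R n) :=
  {σ | (∀ u v : Idx n → R,
          D.bform (Matrix.mulVec σ.val u)
            (Matrix.mulVec σ.val v) = D.bform u v)
      ∧ ∀ u : Idx n → R,
          D.hSub (D.qform (Matrix.mulVec σ.val u)) (D.qform u) ∈ Δ}

/-- The short root matrix `T_{ij}(x)`. -/
def shortRootMat {n : ℕ} (i j : Idx n) (x : R) : Matrix (Idx n) (Idx n) R :=
  1 + Matrix.single i j x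
    - Matrix.single j.neg i.neg
        ((if 0 < j.1 then (1 : R) else D.bar D.lam) * D.bar x *
          (if 0 < i.1 then (1 : R) else D.lam))

/-- The extra short root matrix `T_i(x, y)`. -/
def extraShortRootMat {n : ℕ} (i : Idx n) (x y : R) : Matrix (Idx n) (Idx n) R :=
  1 + Matrix.single (Idx.zero n) i.neg x
    - Matrix.single i (Idx.zero n)
        ((if 0 < i.1 then D.bar D.lam else (1 : R)) * D.bar x * D.mu)
    + Matrix.single i i.neg y

/-- `g` is a short root matrix `T_{ij}(x)`. -/
def IsShortRootElem {n : ℕ} (g : GLn R n) : Prop :=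
  ∃ (i j : Idx n) (x : R), i.1 ≠ 0 ∧ j.1 ≠ 0 ∧ i.1 ≠ j.1 ∧ i.1 ≠ -j.1 ∧
    g.val = D.shortRootMat i j x

/-- `g` is an extra short root matrix `T_i(x, y)` with `(x, y) ∈ Δ^{-ε(i)}`. -/
def IsExtraShortRootElem {n : ℕ} (Δ : Set (R × R)) (g : GLn R n) : Prop :=
  ∃ (i : Idx n) (x y : R), i.1 ≠ 0 ∧ (x, y) ∈ D.paramPow Δ i ∧
    g.val = D.extraShortRootMat i x y

/-- The elementary subgroup `EU_{2n+1}(R, Δ)`. -/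
def elemGroup (Δ : Set (R × R)) (n : ℕ) : Subgroup (GLn R n) :=
  Subgroup.closure {g | D.IsShortRootElem g ∨ D.IsExtraShortRootElem Δ g}

/-- `g` is an `(I, Ω)`-elementary short root matrix. -/
def IsRelShortRootElem {n : ℕ} (I : Set R) (g : GLn R n) : Prop :=
  ∃ (i j : Idx n) (x : R), i.1 ≠ 0 ∧ j.1 ≠ 0 ∧ i.1 ≠ j.1 ∧ i.1 ≠ -j.1 ∧ x ∈ I ∧
    g.val = D.shortRootMat i j x

/-- `g` is an `(I, Ω)`-elementary extra short root matrix. -/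
def IsRelExtraShortRootElem {n : ℕ} (Ω : Set (R × R)) (g : GLn R n) : Prop :=
  ∃ (i : Idx n) (x y : R), i.1 ≠ 0 ∧ (x, y) ∈ D.paramPow Ω i ∧
    g.val = D.extraShortRootMat i x y

/-- The preelementary subgroup `EU_{2n+1}(I, Ω)`. -/
def preElemGroup (I : Set R) (Ω : Set (R × R)) (n : ℕ) : Subgroup (GLn R n) :=
  Subgroup.closure {g | D.IsRelShortRootElem I g ∨ D.IsRelExtraShortRootElem Ω g}

/-- The relative elementary subgroup `EU_{2n+1}((R, Δ), (I, Ω))`,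
the normal closure of `EU_{2n+1}(I, Ω)` in `EU_{2n+1}(R, Δ)`. -/
def elemRelGroup (Δ : Set (R × R)) (I : Set R) (Ω : Set (R × R)) (n : ℕ) : Subgroup (GLn R n) :=
  Subgroup.closure {x | ∃ e ∈ D.elemGroup Δ n, ∃ g ∈ D.preElemGroup I Ω n, x = e * g * e⁻¹}

/-- The principal congruence subgroup `U_{2n+1}((R, Δ), (I, Ω))`. -/
def principalCongruence (Δ : Set (R × R)) (I : Set R) (Ω : Set (R × R)) (n : ℕ) :
    Set (GLn R n) :=
  {σ | σ ∈ D.unitary Δ n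
      ∧ (∀ i j : Idx n, i.1 ≠ 0 → j.1 ≠ 0 →
          σ.val i j - (if i = j then (1 : R) else 0) ∈ I)
      ∧ ∀ u ∈ MRD Δ n,
          D.hSub (D.qform (Matrix.mulVec σ.val u)) (D.qform u) ∈ Ω}

/-- The group `Ũ_{2n+1}((R, Δ), (I, Ω))`. -/
def tildeU (Δ : Set (R × R)) (I : Set R) (Ω : Set (R × R)) (n : ℕ) : Set (GLn R n) :=
  {σ | σ ∈ D.unitary Δ n ∧ ∀ u ∈ MIO I Ω n,
      D.hSub (D.qform (Matrix.mulVec σ.val u)) (D.qform u) ∈ Ω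
      ∧ D.hSub (D.qform (Matrix.mulVec ((σ⁻¹).val) u)) (D.qform u) ∈ Ω}

/-- The full congruence subgroup `CU_{2n+1}((R, Δ), (I, Ω))`. -/
def fullCongruence (Δ : Set (R × R)) (I : Set R) (Ω : Set (R × R)) (n : ℕ) : Set (GLn R n) :=
  {σ | σ ∈ D.tildeU Δ I Ω n ∧ ∀ τ ∈ D.elemGroup Δ n,
      σ * τ * σ⁻¹ * τ⁻¹ ∈ D.principalCongruence Δ I Ω n}

/-- `H` is a subgroup of `U_{2n+1}(R, Δ)`. -/
structure IsSubgroupOfUnitary (Δ : Set (R × R)) (n : ℕ) (H : Set (GLn R n)) : Prop where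
  subset : H ⊆ D.unitary Δ n
  one_mem : (1 : GLn R n) ∈ H
  mul_mem : ∀ a ∈ H, ∀ b ∈ H, a * b ∈ H
  inv_mem : ∀ a ∈ H, a⁻¹ ∈ H

/-- `H` is normalized by the elementary subgroup `EU_{2n+1}(R, Δ)`. -/
def IsENormal (Δ : Set (R × R)) (n : ℕ) (H : Set (GLn R n)) : Prop :=
  ∀ e ∈ D.elemGroup Δ n, ∀ h ∈ H, e * h * e⁻¹ ∈ H

/-- The ideal part of the level of `H`. -/
def levelI {n : ℕ} (H : Set (GLn R n)) : Set R :=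
  {x | ∃ i j : Idx n, i.1 ≠ 0 ∧ j.1 ≠ 0 ∧ i.1 ≠ j.1 ∧ i.1 ≠ -j.1 ∧
      ∃ g ∈ H, g.val = D.shortRootMat i j x}

/-- The form parameter part of the level of `H`. -/
def levelOmega {n : ℕ} (Δ : Set (R × R)) (H : Set (GLn R n)) : Set (R × R) :=
  {p | p ∈ Δ ∧ ∃ i : Idx n, i.1 < 0 ∧
      ∃ g ∈ H, g.val = D.extraShortRootMat i p.1 p.2}

/-- The relative odd form parameter `^σΩ` for `I` defined by `Ω` and `σ`. -/
def transportedParam (Δ : Set (R × R)) (I : Set R) (Ω : Set (R × R)) (n : ℕ) (σ : GLn R n) :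
    Set (R × R) :=
  {p | ∃ x y : R, (x, y) ∈ Ω ∧ ∃ m ∈ D.OmegaMinSet Δ I,
      p = D.hAdd (D.hAdd
            (D.hSMul
              (D.hSub (D.qform (fun i => σ.val i (Idx.zero n)))
                ((1 : R), (0 : R))) x)
            (x, y)) m}

/-- `TEU_{2n+1}(R, Δ)`: upper triangular elementary matrices with ones on the diagonal,
with respect to the index ordering `1, …, n, 0, -n, …, -1`. -/
def upperTriangularElem (Δ : Set (R × R)) (n : ℕ) : Set (GLn R n) :=
  {f | f ∈ D.elemGroup Δ n
      ∧ (∀ i j : Idx n, ordIdx j < ordIdx i → f.val i j = 0)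
      ∧ ∀ i : Idx n, f.val i i = 1}

/-- `UEU_{2n+1}(R, Δ)`: elementary matrices of block form `(A B C; 0 1 D; 0 0 E)`
with respect to the decomposition `Θ₊, {0}, Θ₋`. -/
def blockUpperElem (Δ : Set (R × R)) (n : ℕ) : Set (GLn R n) :=
  {f | f ∈ D.elemGroup Δ n
      ∧ (∀ i j : Idx n, i.1 ≤ 0 → 0 < j.1 → f.val i j = 0)
      ∧ f.val (Idx.zero n) (Idx.zero n) = 1
      ∧ ∀ i : Idx n, i.1 < 0 → f.val i (Idx.zero n) = 0}

/-- `R` is quasifinite: it is the union of a directed family of subrings, each closed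
under the involution, containing `λ` and `μ`, and finitely generated as a module over its
center. -/
def IsQuasifinite : Prop :=
  ∃ S : Set (Subring R), S.Nonempty ∧ DirectedOn (· ≤ ·) S ∧
    (∀ A ∈ S, (∀ x ∈ A, D.bar x ∈ A) ∧ D.lam ∈ A ∧ D.mu ∈ A ∧
      ∃ (m : ℕ) (v : Fin m → R), (∀ k, v k ∈ A) ∧
        ∀ x ∈ A, ∃ c : Fin m → R,
          (∀ k, c k ∈ A ∧ ∀ y ∈ A, c k * y = y * c k) ∧ x = ∑ k, c k * v k) ∧
    ∀ x : R, ∃ A ∈ S, x ∈ A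

end OddFormRingData

/-- The Jacobson radical of a (possibly noncommutative) ring. -/
def jacobsonRadical (R : Type*) [Ring R] : Ideal R := sInf {J : Ideal R | J.IsMaximal}

/-- `R` is semilocal: `R / rad R` is semisimple (hence semisimple Artinian). -/
def IsSemilocalRing (R : Type*) [Ring R] : Prop :=
  IsSemisimpleModule R (R ⧸ jacobsonRadical R)

/-- A bundled (possibly noncommutative) ring. -/
structure BundledRing : Type (u + 1) where
  carrier : Type u
  [str : Ring carrier]

attribute [instance] BundledRing.str

instance : CoeSort BundledRing (Type u) := ⟨BundledRing.carrier⟩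

universe u

/-!
Put `w = q(σe₀)` and `T_σ a = (w ∸ (1, 0)) • a₁ ∔ a = (w₁a₁, ā₁w₂a₁ + a₂)`, so that
`^σΩ = T_σ(Ω) ∔ Ω^I_min`. Unitarity gives `b(σe₀, σe₀) = μ`, and with it `T_σ` is additive up to
the central elements `(0, z̄λ - z)`, `z = x̄' w₂ x`. For `x ∈ Ĩ` and `k ≠ 0` the entries `σ_{k0} x`
lie in `I`: the identity `b(σe₀, e₋ₖ) = b(e₀, σ⁻¹e₋ₖ)` writes `σ̄_{k0}` as `μ (σ⁻¹)_{0,-k}` up to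
a factor `λ̄`, and `(σ⁻¹)_{0,-k} ∈ J(Δ)`. Hence `z ∈ I`; as `Ω^I_min` is normal, `^σΩ` is a
relative odd form parameter.

For the action law write `T_σ a = D_σ(e₀a₁) ∔ a` with the defect `D_σ(u) = q(σu) ∸ q(u)`. It is a
cocycle, `D_{στ}(u) = D_σ(τu) ∔ D_τ(u)`, and changes only by `Ω^I_min` when `u` is moved by a
vector with entries in `I`. Since `τe₀x` and `e₀τ₀₀x` differ by such a vector, `T_{στ}` and
`T_σ ∘ T_τ` agree modulo `Ω^I_min`.
-/

lemma Idx.neg_neg {n : ℕ} (i : Idx n) : i.neg.neg = i := Subtype.ext (_root_.neg_neg i.1)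

@[simp] lemma Idx.zero_val {n : ℕ} : (Idx.zero n).1 = 0 := rfl

lemma mem_posIdx {n : ℕ} {i : Idx n} : i ∈ posIdx n ↔ 0 < i.1 := by simp [posIdx]

namespace OddFormRingData

variable {R : Type*} [Ring R] (D : OddFormRingData R)

local notation:65 a:65 " ∔ " b:66 => D.hAdd a b
local notation:65 a:65 " ∸ " b:66 => D.hSub a b

section Involution

def barAddHom : R →+ R := AddMonoidHom.mk' D.bar D.bar_add

lemma bar_zero : D.bar 0 = 0 := map_zero D.barAddHom

lemma bar_neg (x : R) : D.bar (-x) = -D.bar x := map_neg D.barAddHom x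

lemma bar_sum {ι : Type*} (s : Finset ι) (f : ι → R) :
    D.bar (∑ i ∈ s, f i) = ∑ i ∈ s, D.bar (f i) := map_sum D.barAddHom f s

lemma lam_mul_bar_lam : D.lam * D.bar D.lam = 1 := by
  simpa [D.bar_one] using (D.bar_bar 1).symm

lemma bar_lam_mul_lam : D.bar D.lam * D.lam = 1 := by
  apply (D.bar_bijective.injective.comp D.bar_bijective.injective)
  simp only [Function.comp_apply, D.bar_bar, mul_one]
  calc D.lam * (D.bar D.lam * D.lam) * D.bar D.lam
      = (D.lam * D.bar D.lam) * (D.lam * D.bar D.lam) := by noncomm_ring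
    _ = D.lam * D.bar D.lam := by rw [D.lam_mul_bar_lam, one_mul]

lemma bar_mu : D.bar D.mu = D.mu * D.bar D.lam := by
  conv_rhs => rw [D.mu_symm, mul_assoc, D.lam_mul_bar_lam, mul_one]

lemma bar_mul_mu_mul (a b : R) : D.bar a * D.mu * b = D.bar (D.bar b * D.mu * a) * D.lam := by
  rw [D.bar_mul, D.bar_mul, D.bar_mu, D.bar_bar]
  calc D.bar a * D.mu * b
      = D.bar a * D.mu * (D.bar D.lam * D.lam) * b * (D.bar D.lam * D.lam) := by
        rw [D.bar_lam_mul_lam]; noncomm_ring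
    _ = _ := by noncomm_ring

lemma mul_bar_bar_mul_lam (c b : R) : c * D.bar (D.bar b) * D.lam = c * D.lam * b := by
  rw [D.bar_bar]
  calc c * (D.lam * b * D.bar D.lam) * D.lam
      = c * D.lam * b * (D.bar D.lam * D.lam) := by noncomm_ring
    _ = _ := by rw [D.bar_lam_mul_lam, mul_one]

lemma bar_bar_mul_mul_mul_lam (a s b : R) :
    D.bar (D.bar a * s * b) * D.lam = D.bar b * D.bar s * D.lam * a := by
  rw [D.bar_mul, D.bar_mul, mul_assoc (D.bar b), D.mul_bar_bar_mul_lam]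
  noncomm_ring

end Involution

section Heisenberg

lemma hAdd_assoc (a b c : R × R) : a ∔ b ∔ c = a ∔ (b ∔ c) := by
  ext
  · exact add_assoc _ _ _
  · simp only [hAdd, D.bar_add]; noncomm_ring

lemma hAdd_zero (a : R × R) : a ∔ (0, 0) = a := by
  ext <;> simp [hAdd]

lemma zero_hAdd (a : R × R) : (0, 0) ∔ a = a := by
  ext <;> simp [hAdd, D.bar_zero]

lemma hAdd_central (a : R × R) (e : R) : a ∔ (0, e) = (0, e) ∔ a := by
  ext <;> simp [hAdd, D.bar_zero, add_comm]

lemma hNeg_hNeg (a : R × R) : D.hNeg (D.hNeg a) = a := by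
  ext <;> simp [hNeg, D.bar_neg]

lemma hNeg_central (e : R) : D.hNeg (0, e) = (0, -e) := by
  ext <;> simp [hNeg, D.bar_zero]

lemma hAdd_hNeg_cancel_right (a b : R × R) : a ∔ b ∔ D.hNeg b = a := by
  ext
  · simp only [hNeg, hAdd]; abel
  · simp only [hNeg, hAdd, D.bar_add]; noncomm_ring

lemma hNeg_hAdd_cancel_left (a b : R × R) : D.hNeg a ∔ (a ∔ b) = b := by
  ext
  · simp only [hNeg, hAdd]; abel
  · simp only [hNeg, hAdd, D.bar_neg]; noncomm_ring

lemma hSMul_hAdd (a b : R × R) (r : R) : D.hSMul (a ∔ b) r = D.hSMul a r ∔ D.hSMul b r := by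
  ext <;> simp only [hSMul, hAdd, D.bar_mul] <;> noncomm_ring

lemma hSMul_hNeg (a : R × R) (r : R) : D.hSMul (D.hNeg a) r = D.hNeg (D.hSMul a r) := by
  ext
  · simp only [hSMul, hNeg, neg_mul]
  · simp only [hSMul, hNeg, D.bar_mul]; noncomm_ring

lemma hSMul_hSub (a b : R × R) (r : R) : D.hSMul (a ∸ b) r = D.hSMul a r ∸ D.hSMul b r := by
  rw [hSub, hSub, hSMul_hAdd, hSMul_hNeg]

lemma hSMul_hSMul (a : R × R) (c r : R) : D.hSMul (D.hSMul a c) r = D.hSMul a (c * r) := by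
  ext <;> simp only [hSMul, D.bar_mul] <;> noncomm_ring

lemma hNeg_hSub (a b : R × R) : D.hNeg (a ∸ b) = b ∸ a := by
  ext
  · simp only [hSub, hNeg, hAdd]; abel
  · simp only [hSub, hNeg, hAdd, D.bar_add, D.bar_neg]; noncomm_ring

lemma hSub_hAdd_hSub (a b c : R × R) : a ∸ b ∔ (b ∸ c) = a ∸ c := by
  ext
  · simp only [hSub, hNeg, hAdd]; abel
  · simp only [hSub, hNeg, hAdd, D.bar_add, D.bar_neg]; noncomm_ring

lemma central_hAdd_central (e f : R) : ((0 : R), e) ∔ (0, f) = (0, e + f) := by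
  ext <;> simp [hAdd, D.bar_zero]

lemma hSub_hAdd_central (a b c e : R × R) (β s s' : R) :
    a ∔ b ∔ (0, β + s) ∸ (c ∔ e ∔ (0, β + s'))
      = a ∔ (b ∸ e) ∔ D.hNeg a ∔ (a ∸ c) ∔ (0, s - s') := by
  ext
  · simp only [hSub, hNeg, hAdd]; abel
  · simp only [hSub, hNeg, hAdd, D.bar_add, D.bar_neg]; noncomm_ring

lemma hAdd_eq_hAdd_conj (ω a : R × R) : ω ∔ a = a ∔ (D.hNeg a ∔ ω ∔ a) := by
  ext
  · simp only [hNeg, hAdd]; abel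
  · simp only [hNeg, hAdd, D.bar_add, D.bar_neg]; noncomm_ring

lemma hAdd_hAdd_hAdd_eq_hAdd_conj (a m b m' : R × R) :
    a ∔ m ∔ (b ∔ m') = a ∔ b ∔ (D.hNeg b ∔ m ∔ b ∔ m') := by
  ext
  · simp only [hNeg, hAdd]; abel
  · simp only [hNeg, hAdd, D.bar_add, D.bar_neg]; noncomm_ring

lemma hNeg_hAdd_eq_hAdd_conj (a m : R × R) :
    D.hNeg (a ∔ m) = D.hNeg a ∔ (a ∔ D.hNeg m ∔ D.hNeg a) := by
  ext
  · simp only [hNeg, hAdd]; abel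
  · simp only [hNeg, hAdd, D.bar_add, D.bar_neg]; noncomm_ring

lemma hSub_fst (a b : R × R) : (a ∸ b).1 = a.1 - b.1 := by
  simp [hSub, hAdd, hNeg, sub_eq_add_neg]

end Heisenberg

section FormParameters

variable {D} {Δ : Set (R × R)} {I : Set R}

lemma JSet_add (hΔ : D.IsFormParam Δ) {y y' : R} (hy : y ∈ JSet Δ) (hy' : y' ∈ JSet Δ) :
    y + y' ∈ JSet Δ := by
  obtain ⟨z, hz⟩ := hy
  obtain ⟨z', hz'⟩ := hy'
  exact ⟨_, hΔ.add_mem _ hz _ hz'⟩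

lemma JSet_mul (hΔ : D.IsFormParam Δ) {y : R} (hy : y ∈ JSet Δ) (r : R) : y * r ∈ JSet Δ := by
  obtain ⟨z, hz⟩ := hy
  exact ⟨_, hΔ.smul_mem _ hz r⟩

lemma IsInvIdeal.mem_of_bar_mem (hI : D.IsInvIdeal I) {x : R} (hx : D.bar x ∈ I) : x ∈ I := by
  have h : x = D.bar D.lam * D.bar (D.bar x) * D.lam := by
    rw [D.bar_bar]
    calc x = (D.bar D.lam * D.lam) * x * (D.bar D.lam * D.lam) := by
          rw [D.bar_lam_mul_lam, one_mul, mul_one]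
      _ = _ := by noncomm_ring
  rw [h]
  exact hI.mul_right _ _ (hI.mul_left _ _ (hI.bar_mem _ hx))

lemma IsInvIdeal.sum_mem (hI : D.IsInvIdeal I) {ι : Type*} (s : Finset ι) {f : ι → R}
    (hf : ∀ i ∈ s, f i ∈ I) : ∑ i ∈ s, f i ∈ I := by
  classical
  induction s using Finset.induction_on with
  | empty => exact hI.zero_mem
  | insert j s hj ih =>
    rw [Finset.sum_insert hj]
    exact hI.add_mem _ (hf j (Finset.mem_insert_self j s)) _
      (ih fun i hi => hf i (Finset.mem_insert_of_mem hi))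

lemma mem_tildeI_of_mem (hI : D.IsInvIdeal I) {x : R} (hx : x ∈ I) : x ∈ D.tildeI Δ I :=
  fun _ _ => hI.mul_left _ _ hx

lemma tildeI_add (hI : D.IsInvIdeal I) {x x' : R} (hx : x ∈ D.tildeI Δ I)
    (hx' : x' ∈ D.tildeI Δ I) : x + x' ∈ D.tildeI Δ I := fun y hy => by
  rw [mul_add]
  exact hI.add_mem _ (hx y hy) _ (hx' y hy)

lemma bar_mul_mu_mul_mem_of_mem_tildeI (hI : D.IsInvIdeal I) {x y : R} (hx : x ∈ D.tildeI Δ I)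
    (hy : y ∈ JSet Δ) : D.bar x * D.mu * y ∈ I := by
  rw [D.bar_mul_mu_mul]
  exact hI.mul_right _ _ (hI.bar_mem _ (hx y hy))

lemma central_mem_omegaMin {z : R} (hz : z ∈ I) :
    ((0 : R), z - D.bar z * D.lam) ∈ D.OmegaMinSet Δ I :=
  OmegaMin.base z hz

lemma central_mem_omegaMin' {z : R} (hz : z ∈ I) :
    ((0 : R), D.bar z * D.lam - z) ∈ D.OmegaMinSet Δ I := by
  have h := OmegaMin.neg _ (central_mem_omegaMin (D := D) (Δ := Δ) hz)
  rwa [hNeg_central, neg_sub] at h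

lemma zero_mem_omegaMin (hI : D.IsInvIdeal I) : ((0 : R), (0 : R)) ∈ D.OmegaMinSet Δ I := by
  simpa [D.bar_zero] using central_mem_omegaMin (D := D) (Δ := Δ) hI.zero_mem

lemma hSMul_mem_omegaMin (hI : D.IsInvIdeal I) {a : R × R} (ha : a ∈ D.OmegaMinSet Δ I)
    (r : R) : D.hSMul a r ∈ D.OmegaMinSet Δ I := by
  induction ha with
  | base s hs =>
    have h : D.hSMul ((0 : R), s - D.bar s * D.lam) r
        = ((0 : R), D.bar r * s * r - D.bar (D.bar r * s * r) * D.lam) := by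
      ext
      · simp [hSMul]
      · simp only [hSMul, D.bar_mul, mul_assoc, D.mul_bar_bar_mul_lam]; noncomm_ring
    rw [h]
    exact central_mem_omegaMin (hI.mul_right _ _ (hI.mul_left _ _ hs))
  | smul a ha c hc =>
    rw [D.hSMul_hSMul]
    exact OmegaMin.smul a ha _ (hI.mul_right _ _ hc)
  | add a b _ _ iha ihb => rw [D.hSMul_hAdd]; exact OmegaMin.add _ _ iha ihb
  | neg a _ iha => rw [D.hSMul_hNeg]; exact OmegaMin.neg _ iha

lemma fst_snd_mem_of_mem_omegaMin (hI : D.IsInvIdeal I) {a : R × R}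
    (ha : a ∈ D.OmegaMinSet Δ I) : a.1 ∈ I ∧ a.2 ∈ I := by
  induction ha with
  | base s hs =>
    exact ⟨hI.zero_mem, by
      rw [sub_eq_add_neg]
      exact hI.add_mem _ hs _ (hI.neg_mem _ (hI.mul_right _ _ (hI.bar_mem _ hs)))⟩
  | smul a ha c hc => exact ⟨hI.mul_left _ _ hc, hI.mul_left _ _ hc⟩
  | add a b _ _ iha ihb =>
    refine ⟨hI.add_mem _ iha.1 _ ihb.1, ?_⟩
    rw [hAdd, sub_eq_add_neg]
    exact hI.add_mem _ (hI.add_mem _ iha.2 _ ihb.2) _ (hI.neg_mem _ (hI.mul_left _ _ ihb.1))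
  | neg a _ iha =>
    refine ⟨hI.neg_mem _ iha.1, ?_⟩
    rw [hNeg, sub_eq_add_neg]
    exact hI.add_mem _ (hI.neg_mem _ iha.2) _ (hI.neg_mem _ (hI.mul_left _ _ iha.1))

lemma omegaMin_subset (hΔ : D.IsFormParam Δ) : D.OmegaMinSet Δ I ⊆ Δ := by
  intro a ha
  induction ha with
  | base s _ => exact hΔ.min_le ⟨s, rfl⟩
  | smul a ha c _ => exact hΔ.smul_mem a ha c
  | add a b _ _ iha ihb => exact hΔ.add_mem a iha b ihb
  | neg a _ iha => exact hΔ.neg_mem a iha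

/-- Conjugating by `g` changes `ω` only by the central element `(0, z̄λ - z)`, `z = ḡ₁ μ ω₁`. -/
lemma conj_mem_omegaMin (hI : D.IsInvIdeal I) (g : R × R) {ω : R × R}
    (hω : ω ∈ D.OmegaMinSet Δ I) : g ∔ ω ∔ D.hNeg g ∈ D.OmegaMinSet Δ I := by
  have hz : D.bar g.1 * D.mu * ω.1 ∈ I :=
    hI.mul_left _ _ (fst_snd_mem_of_mem_omegaMin hI hω).1
  have h : g ∔ ω ∔ D.hNeg g
      = ω ∔ ((0 : R), D.bar (D.bar g.1 * D.mu * ω.1) * D.lam - D.bar g.1 * D.mu * ω.1) := by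
    ext
    · simp [hAdd, hNeg]
    · simp only [hAdd, hNeg, D.bar_add]
      rw [← D.bar_mul_mu_mul]
      noncomm_ring
  rw [h]
  exact OmegaMin.add _ _ hω (central_mem_omegaMin' hz)

lemma conj_mem_omegaMin' (hI : D.IsInvIdeal I) (g : R × R) {ω : R × R}
    (hω : ω ∈ D.OmegaMinSet Δ I) : D.hNeg g ∔ ω ∔ g ∈ D.OmegaMinSet Δ I := by
  simpa [D.hNeg_hNeg] using conj_mem_omegaMin hI (D.hNeg g) hω

end FormParameters

section Forms

variable {n : ℕ}

def halfForm (u v : Idx n → R) : R := ∑ i ∈ posIdx n, D.bar (u i) * v i.neg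

lemma qform_eq (u : Idx n → R) : D.qform u = (u (Idx.zero n), D.halfForm u u) := rfl

lemma bform_eq (u v : Idx n → R) :
    D.bform u v = D.halfForm u v + D.bar (u (Idx.zero n)) * D.mu * v (Idx.zero n)
      + D.bar (D.halfForm v u) * D.lam := by
  simp only [bform, halfForm, D.bar_sum, Finset.sum_mul, D.bar_mul, D.mul_bar_bar_mul_lam]

lemma halfForm_add_left (u u' v : Idx n → R) :
    D.halfForm (u + u') v = D.halfForm u v + D.halfForm u' v := by
  simp only [halfForm, Pi.add_apply, D.bar_add, add_mul, Finset.sum_add_distrib]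

lemma halfForm_add_right (u v v' : Idx n → R) :
    D.halfForm u (v + v') = D.halfForm u v + D.halfForm u v' := by
  simp only [halfForm, Pi.add_apply, mul_add, Finset.sum_add_distrib]

lemma halfForm_single_left (j : Idx n) (c : R) (v : Idx n → R) :
    D.halfForm (Pi.single j c) v = if 0 < j.1 then D.bar c * v j.neg else 0 := by
  unfold halfForm
  split_ifs with hj
  · rw [Finset.sum_eq_single j]
    · rw [Pi.single_eq_same]
    · intro i _ hij; rw [Pi.single_eq_of_ne hij, D.bar_zero, zero_mul]
    · intro h; exact absurd (mem_posIdx.mpr hj) h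
  · refine Finset.sum_eq_zero fun i hi => ?_
    have hij : i ≠ j := fun h => hj (h ▸ mem_posIdx.mp hi)
    rw [Pi.single_eq_of_ne hij, D.bar_zero, zero_mul]

lemma halfForm_single_right (u : Idx n → R) (j : Idx n) (c : R) :
    D.halfForm u (Pi.single j c) = if j.1 < 0 then D.bar (u j.neg) * c else 0 := by
  unfold halfForm
  split_ifs with hj
  · rw [Finset.sum_eq_single j.neg]
    · rw [Idx.neg_neg, Pi.single_eq_same]
    · intro i _ hij
      rw [Pi.single_eq_of_ne (fun h => hij (by rw [← h, Idx.neg_neg])), mul_zero]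
    · intro h; exact absurd (mem_posIdx.mpr (neg_pos.mpr hj)) h
  · refine Finset.sum_eq_zero fun i hi => ?_
    have hij : i.neg ≠ j := fun h => hj (h ▸ neg_neg_of_pos (mem_posIdx.mp hi))
    rw [Pi.single_eq_of_ne hij, mul_zero]

lemma qform_single_zero (c : R) :
    D.qform (Pi.single (Idx.zero n) c) = (c, 0) := by
  simp [qform_eq, halfForm_single_left]

lemma qform_mul_right (u : Idx n → R) (c : R) :
    D.qform (fun k => u k * c) = D.hSMul (D.qform u) c := by
  ext
  · rfl
  · simp only [qform_eq, halfForm, hSMul, D.bar_mul, Finset.mul_sum, Finset.sum_mul, mul_assoc]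

lemma qform_add (u g : Idx n → R) :
    D.qform (u + g) = D.qform u ∔ D.qform g
      ∔ ((0 : R), D.bform u g + (D.halfForm g u - D.bar (D.halfForm g u) * D.lam)) := by
  ext
  · simp [qform_eq, hAdd]
  · simp only [qform_eq, hAdd, bform_eq, halfForm_add_left, halfForm_add_right, Pi.add_apply,
      D.bar_add, add_zero]
    noncomm_ring

lemma halfForm_mem {I : Set R} (hI : D.IsInvIdeal I) {u : Idx n → R} (hu : ∀ k, u k ∈ I)
    (v : Idx n → R) : D.halfForm u v ∈ I :=
  hI.sum_mem _ fun i _ => hI.mul_right _ _ (hI.bar_mem _ (hu i))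

lemma bform_single_zero_left (c : R) (u : Idx n → R) :
    D.bform (Pi.single (Idx.zero n) c) u = D.bar c * D.mu * u (Idx.zero n) := by
  simp [bform_eq, halfForm_single_left, halfForm_single_right, D.bar_zero]

lemma bform_single_zero_right (u : Idx n → R) (c : R) :
    D.bform u (Pi.single (Idx.zero n) c) = D.bar (u (Idx.zero n)) * D.mu * c := by
  simp [bform_eq, halfForm_single_left, halfForm_single_right, D.bar_zero]

end Forms

section Unitary

open scoped Matrix

variable {D} {Δ : Set (R × R)} {I : Set R} {n : ℕ} {σ τ : GLn R n}

lemma mulVec_inv_mulVec (σ : GLn R n) (u : Idx n → R) : σ.val *ᵥ ((σ⁻¹).val *ᵥ u) = u := by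
  rw [Matrix.mulVec_mulVec, ← Units.val_mul, mul_inv_cancel, Units.val_one, Matrix.one_mulVec]

lemma mulVec_single_zero (σ : GLn R n) :
    σ.val *ᵥ Pi.single (Idx.zero n) 1 = fun i => σ.val i (Idx.zero n) := by
  ext; simp

lemma bform_mulVec_left (hσ : σ ∈ D.unitary Δ n) (u v : Idx n → R) :
    D.bform (σ.val *ᵥ u) v = D.bform u ((σ⁻¹).val *ᵥ v) := by
  conv_lhs => rw [← mulVec_inv_mulVec σ v]
  exact hσ.1 _ _

lemma bform_mulVec_right (hσ : σ ∈ D.unitary Δ n) (u v : Idx n → R) :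
    D.bform u (σ.val *ᵥ v) = D.bform ((σ⁻¹).val *ᵥ u) v := by
  conv_lhs => rw [← mulVec_inv_mulVec σ u]
  exact hσ.1 _ _

lemma inv_mem_unitary (hΔ : D.IsFormParam Δ) (hσ : σ ∈ D.unitary Δ n) :
    σ⁻¹ ∈ D.unitary Δ n := by
  refine ⟨fun u v => ?_, fun u => ?_⟩
  · rw [← hσ.1, mulVec_inv_mulVec, mulVec_inv_mulVec]
  · have h := hΔ.neg_mem _ (hσ.2 ((σ⁻¹).val *ᵥ u))
    rwa [hNeg_hSub, mulVec_inv_mulVec] at h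

variable (D) in
def defect (σ : GLn R n) (u : Idx n → R) : R × R := D.qform (σ.val *ᵥ u) ∸ D.qform u

lemma defect_mul (σ τ : GLn R n) (u : Idx n → R) :
    D.defect (σ * τ) u = D.defect σ (τ.val *ᵥ u) ∔ D.defect τ u := by
  rw [defect, defect, defect, Units.val_mul, ← Matrix.mulVec_mulVec, hSub_hAdd_hSub]

lemma defect_mul_right (σ : GLn R n) (u : Idx n → R) (c : R) :
    D.defect σ (fun k => u k * c) = D.hSMul (D.defect σ u) c := by
  have h : σ.val *ᵥ (fun k => u k * c) = fun k => (σ.val *ᵥ u) k * c := by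
    ext k; simp [Matrix.mulVec, dotProduct, Finset.sum_mul, mul_assoc]
  rw [defect, defect, h, qform_mul_right, qform_mul_right, hSMul_hSub]

lemma defect_single (σ : GLn R n) (j : Idx n) (c : R) :
    D.defect σ (Pi.single j c) = D.hSMul (D.defect σ (Pi.single j 1)) c := by
  rw [← defect_mul_right]
  congr 1
  ext k
  by_cases hk : k = j
  · subst hk; simp
  · simp [Pi.single_eq_of_ne hk]

lemma defect_single_zero (σ : GLn R n) :
    D.defect σ (Pi.single (Idx.zero n) 1) = D.qform (fun i => σ.val i (Idx.zero n)) ∸ (1, 0) := by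
  rw [defect, mulVec_single_zero, qform_single_zero]

lemma sub_one_apply_zero_mem_JSet (hσ : σ ∈ D.unitary Δ n) (j : Idx n) :
    (σ.val - 1) (Idx.zero n) j ∈ JSet Δ := by
  refine ⟨(D.defect σ (Pi.single j 1)).2, ?_⟩
  convert hσ.2 (Pi.single j 1) using 1
  ext
  · simp [hSub_fst, qform_eq, Matrix.one_apply, Pi.single_apply]
  · rfl

lemma exists_bar_apply_zero_eq_mu_mul (hΔ : D.IsFormParam Δ) (hσ : σ ∈ D.unitary Δ n) {k : Idx n}
    (hk : k ≠ Idx.zero n) : ∃ y ∈ JSet Δ, D.bar (σ.val k (Idx.zero n)) = D.mu * y := by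
  have hk' : k.neg ≠ Idx.zero n := fun h => hk (by rw [← Idx.neg_neg k, h]; rfl)
  have hρ : (σ⁻¹).val (Idx.zero n) k.neg ∈ JSet Δ := by
    simpa [Matrix.one_apply, Ne.symm hk'] using
      sub_one_apply_zero_mem_JSet (inv_mem_unitary hΔ hσ) k.neg
  have hb : D.bform (fun i => σ.val i (Idx.zero n)) (Pi.single k.neg 1)
      = D.mu * (σ⁻¹).val (Idx.zero n) k.neg := by
    rw [← mulVec_single_zero, bform_mulVec_left hσ, bform_single_zero_left, D.bar_one, one_mul]
    simp
  have hk0 : k.1 ≠ 0 := fun h => hk (Subtype.ext h)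
  rcases hk0.lt_or_gt with hneg | hpos
  · refine ⟨(σ⁻¹).val (Idx.zero n) k.neg * D.bar D.lam, JSet_mul hΔ hρ _, ?_⟩
    have h0 : ¬ k.neg.1 < 0 := by simp only [Idx.neg]; omega
    have h1 : 0 < k.neg.1 := by simp only [Idx.neg]; omega
    rw [bform_eq, halfForm_single_right, halfForm_single_left, if_neg h0, if_pos h1] at hb
    simp only [Idx.neg_neg, D.bar_one, one_mul, Pi.single_eq_of_ne (Ne.symm hk'), mul_zero,
      zero_add] at hb
    rw [← mul_assoc, ← hb, mul_assoc, D.lam_mul_bar_lam, mul_one]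
  · refine ⟨(σ⁻¹).val (Idx.zero n) k.neg, hρ, ?_⟩
    have h0 : k.neg.1 < 0 := by simp only [Idx.neg]; omega
    have h1 : ¬ 0 < k.neg.1 := by simp only [Idx.neg]; omega
    rw [bform_eq, halfForm_single_right, halfForm_single_left, if_pos h0, if_neg h1] at hb
    simpa [Idx.neg_neg, Pi.single_eq_of_ne (Ne.symm hk'), D.bar_zero] using hb

lemma apply_zero_mul_mem (hΔ : D.IsFormParam Δ) (hI : D.IsInvIdeal I)
    (hσ : σ ∈ D.unitary Δ n) {k : Idx n} (hk : k ≠ Idx.zero n) {x : R}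
    (hx : x ∈ D.tildeI Δ I) : σ.val k (Idx.zero n) * x ∈ I := by
  obtain ⟨y, hy, hbar⟩ := exists_bar_apply_zero_eq_mu_mul hΔ hσ hk
  refine hI.mem_of_bar_mem ?_
  rw [D.bar_mul, hbar, ← mul_assoc]
  exact bar_mul_mu_mul_mem_of_mem_tildeI hI hx hy

lemma apply_zero_zero_mul_mem_tildeI (hΔ : D.IsFormParam Δ) (hσ : σ ∈ D.unitary Δ n) {x : R}
    (hx : x ∈ D.tildeI Δ I) :
    σ.val (Idx.zero n) (Idx.zero n) * x ∈ D.tildeI Δ I := by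
  have hμ : D.mu * σ.val (Idx.zero n) (Idx.zero n)
      = D.bar ((σ⁻¹).val (Idx.zero n) (Idx.zero n)) * D.mu := by
    have h := bform_mulVec_right hσ (Pi.single (Idx.zero n) 1) (Pi.single (Idx.zero n) 1)
    rw [mulVec_single_zero, bform_single_zero_left, bform_single_zero_right] at h
    simpa [D.bar_one] using h
  have hρ : (σ⁻¹).val (Idx.zero n) (Idx.zero n) - 1 ∈ JSet Δ := by
    simpa [Matrix.one_apply] using
      sub_one_apply_zero_mem_JSet (inv_mem_unitary hΔ hσ) (Idx.zero n)
  intro y hy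
  have hρy : (σ⁻¹).val (Idx.zero n) (Idx.zero n) * y ∈ JSet Δ := by
    simpa [sub_mul] using JSet_add hΔ hy (JSet_mul hΔ hρ y)
  have h : D.bar y * D.mu * (σ.val (Idx.zero n) (Idx.zero n) * x)
      = D.bar ((σ⁻¹).val (Idx.zero n) (Idx.zero n) * y) * D.mu * x := by
    rw [mul_assoc (D.bar y), ← mul_assoc D.mu, hμ, D.bar_mul]; noncomm_ring
  rw [h]
  exact hx _ hρy

lemma bar_mul_qform_snd_mul_mem (hΔ : D.IsFormParam Δ) (hI : D.IsInvIdeal I)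
    (hσ : σ ∈ D.unitary Δ n) (x' : R) {x : R} (hx : x ∈ D.tildeI Δ I) :
    D.bar x' * (D.qform fun i => σ.val i (Idx.zero n)).2 * x ∈ I := by
  rw [qform_eq, halfForm, Finset.mul_sum, Finset.sum_mul]
  refine hI.sum_mem _ fun i hi => ?_
  have hi' : i.neg ≠ Idx.zero n := fun h => by
    have := congrArg Subtype.val h
    simp [Idx.neg] at this
    exact (mem_posIdx.mp hi).ne' this
  simpa [mul_assoc] using
    hI.mul_left (D.bar x' * D.bar (σ.val i (Idx.zero n))) _ (apply_zero_mul_mem hΔ hI hσ hi' hx)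

/-- This is `b(σe₀, σe₀) = b(e₀, e₀) = μ`. -/
lemma qform_col_zero_relation (hσ : σ ∈ D.unitary Δ n) :
    (D.qform fun i => σ.val i (Idx.zero n)).2
      + D.bar (D.qform fun i => σ.val i (Idx.zero n)).1 * D.mu
        * (D.qform fun i => σ.val i (Idx.zero n)).1
      + D.bar (D.qform fun i => σ.val i (Idx.zero n)).2 * D.lam = D.mu := by
  have h := hσ.1 (Pi.single (Idx.zero n) 1) (Pi.single (Idx.zero n) 1)
  rw [mulVec_single_zero, bform_single_zero_left, bform_eq, D.bar_one, one_mul,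
    Pi.single_eq_same, mul_one] at h
  exact h

lemma defect_add (hσ : σ ∈ D.unitary Δ n) (u g : Idx n → R) :
    D.defect σ (u + g)
      = D.qform (σ.val *ᵥ u) ∔ D.defect σ g ∔ D.hNeg (D.qform (σ.val *ᵥ u)) ∔ D.defect σ u
        ∔ (0, (D.halfForm (σ.val *ᵥ g) (σ.val *ᵥ u)
                - D.bar (D.halfForm (σ.val *ᵥ g) (σ.val *ᵥ u)) * D.lam)
              - (D.halfForm g u - D.bar (D.halfForm g u) * D.lam)) := by
  rw [defect, Matrix.mulVec_add, qform_add, qform_add, hσ.1, hSub_hAdd_central]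
  rfl

lemma mulVec_mem (hI : D.IsInvIdeal I) (σ : GLn R n) {g : Idx n → R} (hg : ∀ k, g k ∈ I)
    (k : Idx n) : (σ.val *ᵥ g) k ∈ I :=
  hI.sum_mem Finset.univ fun l _ => hI.mul_left (σ.val k l) _ (hg l)

lemma exists_defect_add_eq_of_defect_mem (hI : D.IsInvIdeal I) (hσ : σ ∈ D.unitary Δ n)
    (u : Idx n → R) {g : Idx n → R} (hg : ∀ k, g k ∈ I)
    (hdg : D.defect σ g ∈ D.OmegaMinSet Δ I) :
    ∃ ω ∈ D.OmegaMinSet Δ I, D.defect σ (u + g) = ω ∔ D.defect σ u := by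
  set s₁ := D.halfForm (σ.val *ᵥ g) (σ.val *ᵥ u)
  set s₂ := D.halfForm g u
  have hc : ((0 : R), (s₁ - D.bar s₁ * D.lam) - (s₂ - D.bar s₂ * D.lam)) ∈ D.OmegaMinSet Δ I := by
    have h := OmegaMin.add _ _ (central_mem_omegaMin (D := D) (Δ := Δ)
      (halfForm_mem D hI (mulVec_mem hI σ hg) (σ.val *ᵥ u)))
      (OmegaMin.neg _ (central_mem_omegaMin (D := D) (Δ := Δ) (halfForm_mem D hI hg u)))
    rwa [hNeg_central, central_hAdd_central, ← sub_eq_add_neg] at h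
  refine ⟨_, OmegaMin.add _ _ (conj_mem_omegaMin hI (D.qform (σ.val *ᵥ u)) hdg) hc, ?_⟩
  rw [defect_add hσ, D.hAdd_assoc _ (D.defect σ u), D.hAdd_central, ← D.hAdd_assoc]

lemma exists_defect_add_eq (hI : D.IsInvIdeal I) (hσ : σ ∈ D.unitary Δ n) (u : Idx n → R)
    {g : Idx n → R} (hg : ∀ k, g k ∈ I) :
    ∃ ω ∈ D.OmegaMinSet Δ I, D.defect σ (u + g) = ω ∔ D.defect σ u := by
  rw [← Finset.univ_sum_single g]
  revert u
  refine Finset.sum_induction _ (fun h => ∀ u, ∃ ω ∈ D.OmegaMinSet Δ I,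
    D.defect σ (u + h) = ω ∔ D.defect σ u) ?_ ?_ ?_
  · intro a b ha hb u
    obtain ⟨ω₁, hω₁, h₁⟩ := ha u
    obtain ⟨ω₂, hω₂, h₂⟩ := hb (u + a)
    exact ⟨ω₂ ∔ ω₁, OmegaMin.add _ _ hω₂ hω₁, by rw [← add_assoc, h₂, h₁, D.hAdd_assoc]⟩
  · exact fun u => ⟨(0, 0), zero_mem_omegaMin hI, by rw [add_zero, D.zero_hAdd]⟩
  · intro j _ u
    refine exists_defect_add_eq_of_defect_mem hI hσ u (fun k => ?_) ?_
    · by_cases hk : k = j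
      · subst hk; simpa using hg k
      · simpa [Pi.single_eq_of_ne hk] using hI.zero_mem
    · rw [defect_single]
      exact OmegaMin.smul _ (hσ.2 _) _ (hg j)

end Unitary

section Transport

open scoped Matrix

variable {D} {Δ : Set (R × R)} {I : Set R} {n : ℕ} {σ τ : GLn R n}

variable (D) in
/-- The map `a ↦ (w ∸ (1, 0)) • a₁ ∔ a` defining `^σΩ` for `w = q(σ_{*0})`, in coordinates. -/
def transportMap (w a : R × R) : R × R := (w.1 * a.1, D.bar a.1 * w.2 * a.1 + a.2)

lemma hSMul_hSub_one_hAdd (w a : R × R) :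
    D.hSMul (w ∸ (1, 0)) a.1 ∔ a = D.transportMap w a := by
  ext
  · simp only [hSMul, hSub, hAdd, hNeg, transportMap]; noncomm_ring
  · simp only [hSMul, hSub, hAdd, hNeg, transportMap, D.bar_mul, D.bar_add, D.bar_neg, D.bar_one]
    noncomm_ring

lemma mem_transportedParam {Ω : Set (R × R)} {p : R × R} :
    p ∈ D.transportedParam Δ I Ω n σ ↔ ∃ a ∈ Ω, ∃ m ∈ D.OmegaMinSet Δ I,
      p = D.transportMap (D.qform fun i => σ.val i (Idx.zero n)) a ∔ m := by
  constructor
  · rintro ⟨x, y, hxy, m, hm, rfl⟩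
    exact ⟨(x, y), hxy, m, hm, by rw [← hSMul_hSub_one_hAdd]⟩
  · rintro ⟨a, ha, m, hm, rfl⟩
    exact ⟨a.1, a.2, ha, m, hm, by rw [← hSMul_hSub_one_hAdd]⟩

lemma bar_mul_mu_mul_of_relation {w : R × R}
    (hW : w.2 + D.bar w.1 * D.mu * w.1 + D.bar w.2 * D.lam = D.mu)
    (x y : R) :
    D.bar (w.1 * x) * D.mu * (w.1 * y) = D.bar x * (D.mu - w.2 - D.bar w.2 * D.lam) * y := by
  have hW' : D.bar w.1 * D.mu * w.1 = D.mu - w.2 - D.bar w.2 * D.lam := by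
    conv_rhs => rw [← hW]
    abel
  rw [← hW', D.bar_mul]
  noncomm_ring

lemma transportMap_hAdd {w : R × R}
    (hW : w.2 + D.bar w.1 * D.mu * w.1 + D.bar w.2 * D.lam = D.mu)
    (a b : R × R) :
    D.transportMap w a ∔ D.transportMap w b = D.transportMap w (a ∔ b)
      ∔ (0, D.bar (D.bar b.1 * w.2 * a.1) * D.lam - D.bar b.1 * w.2 * a.1) := by
  ext
  · simp only [transportMap, hAdd]; noncomm_ring
  · simp only [transportMap, hAdd, bar_mul_mu_mul_of_relation hW, D.bar_bar_mul_mul_mul_lam,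
      D.bar_add, mul_zero, sub_zero]
    noncomm_ring

lemma transportMap_hNeg {w : R × R}
    (hW : w.2 + D.bar w.1 * D.mu * w.1 + D.bar w.2 * D.lam = D.mu)
    (a : R × R) :
    D.hNeg (D.transportMap w a) = D.transportMap w (D.hNeg a)
      ∔ (0, D.bar (D.bar a.1 * w.2 * a.1) * D.lam - D.bar a.1 * w.2 * a.1) := by
  ext
  · simp [transportMap, hAdd, hNeg]
  · simp only [transportMap, hAdd, hNeg, bar_mul_mu_mul_of_relation hW,
      D.bar_bar_mul_mul_mul_lam, D.bar_neg, mul_zero, sub_zero]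
    noncomm_ring

lemma transportMap_hSMul (w a : R × R) (r : R) :
    D.transportMap w (D.hSMul a r) = D.hSMul (D.transportMap w a) r := by
  ext
  · simp [transportMap, hSMul, mul_assoc]
  · simp only [transportMap, hSMul, D.bar_mul]; noncomm_ring

lemma transportMap_zero (w : R × R) : D.transportMap w (0, 0) = (0, 0) := by
  simp [transportMap, D.bar_zero]

lemma transportMap_one (a : R × R) : D.transportMap (1, 0) a = a := by
  simp [transportMap]

lemma transportMap_qform_col_zero (σ : GLn R n) (a : R × R) :
    D.transportMap (D.qform fun i => σ.val i (Idx.zero n)) a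
      = D.defect σ (Pi.single (Idx.zero n) a.1) ∔ a := by
  rw [defect_single, defect_single_zero, hSMul_hSub_one_hAdd]

lemma qform_col_zero_hSub_one_mem (hσ : σ ∈ D.unitary Δ n) :
    D.qform (fun i => σ.val i (Idx.zero n)) ∸ (1, 0) ∈ Δ := by
  rw [← defect_single_zero]
  exact hσ.2 _

lemma transportMap_hAdd_mem_omegaMaxSet (hΔ : D.IsFormParam Δ) (hI : D.IsInvIdeal I)
    (hσ : σ ∈ D.unitary Δ n) {a m : R × R} (ha : a ∈ D.OmegaMaxSet Δ I)
    (hm : m ∈ D.OmegaMinSet Δ I) :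
    D.transportMap (D.qform fun i => σ.val i (Idx.zero n)) a ∔ m ∈ D.OmegaMaxSet Δ I := by
  obtain ⟨haΔ, ha₁, ha₂⟩ := ha
  obtain ⟨hm₁, hm₂⟩ := fst_snd_mem_of_mem_omegaMin hI hm
  refine ⟨?_, ?_, ?_⟩
  · rw [← hSMul_hSub_one_hAdd]
    exact hΔ.add_mem _ (hΔ.add_mem _ (hΔ.smul_mem _ (qform_col_zero_hSub_one_mem hσ) _) _ haΔ) _
      (omegaMin_subset hΔ hm)
  · exact tildeI_add hI (apply_zero_zero_mul_mem_tildeI hΔ hσ ha₁) (mem_tildeI_of_mem hI hm₁)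
  · simp only [transportMap, hAdd, sub_eq_add_neg]
    exact hI.add_mem _ (hI.add_mem _ (hI.add_mem _ (bar_mul_qform_snd_mul_mem hΔ hI hσ _ ha₁) _ ha₂)
      _ hm₂) _ (hI.neg_mem _ (hI.mul_left _ _ hm₁))

theorem isRelFormParam_transportedParam (hΔ : D.IsFormParam Δ) (hI : D.IsInvIdeal I)
    {Ω : Set (R × R)} (hΩ : D.IsRelFormParam Δ I Ω) (hσ : σ ∈ D.unitary Δ n) :
    D.IsRelFormParam Δ I (D.transportedParam Δ I Ω n σ) := by
  have hW := qform_col_zero_relation hσ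
  have hz : ∀ x' {a}, a ∈ Ω →
      D.bar x' * (D.qform fun i => σ.val i (Idx.zero n)).2 * a.1 ∈ I :=
    fun x' _ ha => bar_mul_qform_snd_mul_mem hΔ hI hσ x' (hΩ.le_max ha).2.1
  refine ⟨?_, ?_, ?_, ?_, ?_⟩
  · rintro _ hp _ hq
    obtain ⟨a, ha, m, hm, rfl⟩ := mem_transportedParam.mp hp
    obtain ⟨b, hb, m', hm', rfl⟩ := mem_transportedParam.mp hq
    refine mem_transportedParam.mpr ⟨a ∔ b, hΩ.add_mem _ ha _ hb, _, ?_,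
      by rw [hAdd_hAdd_hAdd_eq_hAdd_conj, transportMap_hAdd hW, hAdd_assoc]⟩
    exact OmegaMin.add _ _ (central_mem_omegaMin' (hz _ ha))
      (OmegaMin.add _ _ (conj_mem_omegaMin' hI _ hm) hm')
  · rintro _ hp
    obtain ⟨a, ha, m, hm, rfl⟩ := mem_transportedParam.mp hp
    refine mem_transportedParam.mpr ⟨D.hNeg a, hΩ.neg_mem _ ha, _, ?_,
      by rw [hNeg_hAdd_eq_hAdd_conj]; nth_rw 1 [transportMap_hNeg hW]; rw [hAdd_assoc]⟩
    exact OmegaMin.add _ _ (central_mem_omegaMin' (hz _ ha))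
      (conj_mem_omegaMin hI _ (OmegaMin.neg _ hm))
  · rintro _ hp r
    obtain ⟨a, ha, m, hm, rfl⟩ := mem_transportedParam.mp hp
    exact mem_transportedParam.mpr ⟨D.hSMul a r, hΩ.smul_mem _ ha r, _,
      hSMul_mem_omegaMin hI hm r, by rw [hSMul_hAdd, transportMap_hSMul]⟩
  · intro m hm
    exact mem_transportedParam.mpr ⟨(0, 0), hΩ.min_le (zero_mem_omegaMin hI), m, hm,
      by rw [transportMap_zero, zero_hAdd]⟩
  · rintro _ hp
    obtain ⟨a, ha, m, hm, rfl⟩ := mem_transportedParam.mp hp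
    exact transportMap_hAdd_mem_omegaMaxSet hΔ hI hσ (hΩ.le_max ha) hm

theorem transportedParam_one (hI : D.IsInvIdeal I) {Ω : Set (R × R)}
    (hΩ : D.IsRelFormParam Δ I Ω) : D.transportedParam Δ I Ω n 1 = Ω := by
  have hw : (D.qform fun i => (1 : GLn R n).val i (Idx.zero n)) = (1, 0) := by
    rw [← mulVec_single_zero, Units.val_one, Matrix.one_mulVec, qform_single_zero]
  ext p
  simp only [mem_transportedParam, hw, transportMap_one]
  constructor
  · rintro ⟨a, ha, m, hm, rfl⟩
    exact hΩ.add_mem _ ha _ (hΩ.min_le hm)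
  · exact fun hp => ⟨p, hp, (0, 0), zero_mem_omegaMin hI, (D.hAdd_zero p).symm⟩

lemma exists_transportMap_mul_eq (hΔ : D.IsFormParam Δ) (hI : D.IsInvIdeal I)
    (hσ : σ ∈ D.unitary Δ n) (hτ : τ ∈ D.unitary Δ n) {a : R × R}
    (ha : a.1 ∈ D.tildeI Δ I) :
    ∃ ω ∈ D.OmegaMinSet Δ I, D.transportMap (D.qform fun i => (σ * τ).val i (Idx.zero n)) a
      = ω ∔ D.transportMap (D.qform fun i => σ.val i (Idx.zero n))
          (D.transportMap (D.qform fun i => τ.val i (Idx.zero n)) a) := by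
  set x' := (D.transportMap (D.qform fun i => τ.val i (Idx.zero n)) a).1 with hx'
  set g := τ.val *ᵥ Pi.single (Idx.zero n) a.1 - Pi.single (Idx.zero n) x'
  have hg : ∀ k, g k ∈ I := by
    intro k
    by_cases hk : k = Idx.zero n
    · subst hk
      simpa [g, hx', transportMap, qform_eq] using hI.zero_mem
    · simpa [g, Pi.single_eq_of_ne hk] using apply_zero_mul_mem hΔ hI hτ hk ha
  obtain ⟨ω, hω, h⟩ := exists_defect_add_eq hI hσ (Pi.single (Idx.zero n) x') hg
  refine ⟨ω, hω, ?_⟩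
  rw [transportMap_qform_col_zero, transportMap_qform_col_zero σ, ← hx', defect_mul,
    ← add_sub_cancel (Pi.single (Idx.zero n) x') (τ.val *ᵥ Pi.single (Idx.zero n) a.1), h,
    transportMap_qform_col_zero τ]
  simp only [hAdd_assoc]

lemma exists_transportMap_hAdd_eq (hI : D.IsInvIdeal I) (hσ : σ ∈ D.unitary Δ n)
    (b : R × R) {m : R × R} (hm : m ∈ D.OmegaMinSet Δ I) :
    ∃ ω ∈ D.OmegaMinSet Δ I, D.transportMap (D.qform fun i => σ.val i (Idx.zero n)) (b ∔ m)
      = D.transportMap (D.qform fun i => σ.val i (Idx.zero n)) b ∔ ω := by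
  have hm₁ := (fst_snd_mem_of_mem_omegaMin hI hm).1
  refine ⟨_, OmegaMin.add _ _ ?_ (OmegaMin.neg _ (central_mem_omegaMin' ?_)),
    by rw [← hAdd_assoc, transportMap_hAdd (qform_col_zero_relation hσ), hAdd_hNeg_cancel_right]⟩
  · rw [← hSMul_hSub_one_hAdd]
    exact OmegaMin.add _ _ (OmegaMin.smul _ (qform_col_zero_hSub_one_mem hσ) _ hm₁) hm
  · exact hI.mul_right _ _ (hI.mul_right _ _ (hI.bar_mem _ hm₁))

theorem transportedParam_mul (hΔ : D.IsFormParam Δ) (hI : D.IsInvIdeal I) {Ω : Set (R × R)}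
    (hΩ : D.IsRelFormParam Δ I Ω) (hσ : σ ∈ D.unitary Δ n) (hτ : τ ∈ D.unitary Δ n) :
    D.transportedParam Δ I Ω n (σ * τ)
      = D.transportedParam Δ I (D.transportedParam Δ I Ω n τ) n σ := by
  ext p
  simp only [mem_transportedParam]
  constructor
  · rintro ⟨a, ha, m, hm, rfl⟩
    obtain ⟨ω, hω, h⟩ := exists_transportMap_mul_eq hΔ hI hσ hτ (hΩ.le_max ha).2.1
    refine ⟨_, ⟨a, ha, (0, 0), zero_mem_omegaMin hI, (D.hAdd_zero _).symm⟩, _, ?_,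
      by rw [h, D.hAdd_eq_hAdd_conj ω, hAdd_assoc]⟩
    exact OmegaMin.add _ _ (conj_mem_omegaMin' hI _ hω) hm
  · rintro ⟨_, ⟨a, ha, m', hm', rfl⟩, m, hm, rfl⟩
    obtain ⟨ω₁, hω₁, h₁⟩ := exists_transportMap_hAdd_eq hI hσ _ hm'
    obtain ⟨ω₂, hω₂, h₂⟩ := exists_transportMap_mul_eq hΔ hI hσ hτ (hΩ.le_max ha).2.1
    rw [h₁, ← D.hNeg_hAdd_cancel_left ω₂ (D.transportMap _ _), ← h₂]
    refine ⟨a, ha, _, ?_, by rw [D.hAdd_eq_hAdd_conj (D.hNeg ω₂), hAdd_assoc, hAdd_assoc]⟩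
    exact OmegaMin.add _ _ (conj_mem_omegaMin' hI _ (OmegaMin.neg _ hω₂)) (OmegaMin.add _ _ hω₁ hm)

end Transport

end OddFormRingData

theorem statement9_general {R : Type*} [Ring R] (D : OddFormRingData R)
    (Δ : Set (R × R)) (hΔ : D.IsFormParam Δ) (n : ℕ)
    (I : Set R) (hI : D.IsInvIdeal I) :
    (∀ Ω : Set (R × R), D.IsRelFormParam Δ I Ω → ∀ σ ∈ D.unitary Δ n,
      D.IsRelFormParam Δ I (D.transportedParam Δ I Ω n σ)) ∧
    (∀ Ω : Set (R × R), D.IsRelFormParam Δ I Ω →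
      D.transportedParam Δ I Ω n 1 = Ω) ∧
    (∀ Ω : Set (R × R), D.IsRelFormParam Δ I Ω → ∀ σ ∈ D.unitary Δ n, ∀ τ ∈ D.unitary Δ n,
      D.transportedParam Δ I Ω n (σ * τ)
        = D.transportedParam Δ I (D.transportedParam Δ I Ω n τ) n σ) :=
  ⟨fun _ hΩ _ hσ => D.isRelFormParam_transportedParam hΔ hI hΩ hσ,
    fun _ hΩ => D.transportedParam_one hI hΩ,
    fun _ hΩ _ hσ _ hτ => D.transportedParam_mul hΔ hI hΩ hσ hτ⟩

/-- The map `(σ, Ω) ↦ ^σΩ` is a left group action of `U_{2n+1}(R, Δ)` on the set of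
relative odd form parameters for `I`. -/
theorem statement9 {R : Type*} [Ring R] [Nontrivial R] (D : OddFormRingData R)
    (Δ : Set (R × R)) (hΔ : D.IsFormParam Δ) (n : ℕ)
    (I : Set R) (hI : D.IsInvIdeal I) :
    (∀ Ω : Set (R × R), D.IsRelFormParam Δ I Ω → ∀ σ ∈ D.unitary Δ n,
      D.IsRelFormParam Δ I (D.transportedParam Δ I Ω n σ)) ∧
    (∀ Ω : Set (R × R), D.IsRelFormParam Δ I Ω →
      D.transportedParam Δ I Ω n 1 = Ω) ∧
    (∀ Ω : Set (R × R), D.IsRelFormParam Δ I Ω → ∀ σ ∈ D.unitary Δ n, ∀ τ ∈ D.unitary Δ n,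
      D.transportedParam Δ I Ω n (σ * τ)
        = D.transportedParam Δ I (D.transportedParam Δ I Ω n τ) n σ) :=
  statement9_general D Δ hΔ n I hI
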